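/- Let F be a field, let a, b, c, a', b', c' ∈ F with c ≠ 0 and c' ≠ 0, and let f ∈ PGL₂(F) be an automorphism of ℙ¹ fixing both (1:0) and (0:1). If conjugation by f carries the quadratic rational map φ(X:Y) = (X² + aXY : bXY + cY²) to φ'(X:Y) = (X² + a'XY : b'XY + c'Y²) (i.e. φ' = f^{-1} ∘ φ ∘ f as maps ℙ¹ → ℙ¹), then a'b'/c' = ab/c. Explicitly, such an f is of the form f(X:Y) = (αX : Y) for some α ∈ F^×, the conjugate is φ^f(X:Y) = (X² + α^{-1}aXY : bXY + α^{-1}cY²), and the quantity ab/c is unchanged. -/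
import Mathlib


/-- Let `F` be a field, `a, b, c, a', b', c' ∈ F` with `c ≠ 0`,
`c' ≠ 0`.  Let `f ∈ PGL₂(F)` be given by the invertible matrix `[[p, q], [r, s]]`,
and suppose `f` fixes `(1:0)` and `(0:1)` (i.e. `(p, r)` is proportional to `(1, 0)`
and `(q, s)` is proportional to `(0, 1)`).  If conjugation by `f` carries
`φ = (X² + aXY : bXY + cY²)` to `φ' = (X² + a'XY : b'XY + c'Y²)`, i.e. the pair of
forms `f⁻¹ ∘ (X² + aXY, bXY + cY²) ∘ f` is a nonzero scalar multiple `t` of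
`(X² + a'XY, b'XY + c'Y²)`, then `a'b'/c' = ab/c`. -/
theorem ab_div_c_invariant_under_diagonal_conjugation
    (F : Type*) [Field F] (a b c a' b' c' : F) (hc : c ≠ 0) (hc' : c' ≠ 0)
    (p q r s : F) (hdet : p * s - q * r ≠ 0)
    (hfix1 : ∃ μ : F, μ ≠ 0 ∧ p = μ * 1 ∧ r = μ * 0)
    (hfix2 : ∃ ν : F, ν ≠ 0 ∧ q = ν * 0 ∧ s = ν * 1)
    (hconj : ∃ t : F, t ≠ 0 ∧ ∀ x y : F,
      s * ((p * x + q * y) ^ 2 + a * (p * x + q * y) * (r * x + s * y))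
          - q * (b * (p * x + q * y) * (r * x + s * y) + c * (r * x + s * y) ^ 2)
        = (p * s - q * r) * (t * (x ^ 2 + a' * x * y)) ∧
      p * (b * (p * x + q * y) * (r * x + s * y) + c * (r * x + s * y) ^ 2)
          - r * ((p * x + q * y) ^ 2 + a * (p * x + q * y) * (r * x + s * y))
        = (p * s - q * r) * (t * (b' * x * y + c' * y ^ 2))) :
    a' * b' / c' = a * b / c := by
  obtain ⟨μ, hμ, hp, hr⟩ := hfix1
  obtain ⟨ν, hν, hq, hs⟩ := hfix2
  obtain ⟨t, ht, h⟩ := hconj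
  subst hp hr hq hs
  have e1 := (h 1 0).1
  have e2 := (h 1 1).1
  have e3 := (h 0 1).2
  have e4 := (h 1 1).2
  ring_nf at e1 e2 e3 e4
  have hnm : ν * μ ≠ 0 := mul_ne_zero hν hμ
  have htμ : t = μ := mul_left_cancel₀ hnm (by linear_combination -e1)
  rw [htμ] at e2 e3 e4
  have ha' : a' * μ = a * ν := mul_left_cancel₀ hnm (by linear_combination -e2)
  have hc2 : c' * μ = c * ν := mul_left_cancel₀ hnm (by linear_combination -e3)
  have hb' : b' = b := mul_left_cancel₀ (mul_ne_zero hnm hμ) (by linear_combination e3 - e4)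
  rw [div_eq_div_iff hc' hc]
  refine mul_right_cancel₀ hμ ?_
  linear_combination b' * c * ha' - a * b * hc2 + a * ν * c * hb'
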